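/- Let W ⊆ ℝ^d be a linear subspace with dim W ≥ r and let P_W be the orthogonal projection onto W. Then for every choice of data points x_1, …, x_N ∈ ℝ^d, the empirical Gaussian complexity of the subspace-constrained class satisfies Ĝ_X(H_W) ≤ (r/√N) · √( (1/N) Σ_{i=1}^N ‖P_W x_i‖² ) , i.e., Ĝ_X(H_W) ≤ (r/√N) · √( tr( (1/N)·P_W X Xᵀ P_W ) ). -/

import Mathlib

open MeasureTheory ProbabilityTheory
open scoped ENNReal

section Helpers
open Real
open MeasureTheory ProbabilityTheory Real

lemma myint_mul_exp : Integrable (fun x : ℝ => x * rexp (-(2⁻¹ : ℝ) * x ^ 2)) := by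
  simpa using integrable_mul_exp_neg_mul_sq (by norm_num : (0:ℝ) < 2⁻¹)

lemma myint_exp : Integrable (fun x : ℝ => rexp (-(2⁻¹ : ℝ) * x ^ 2)) :=
  integrable_exp_neg_mul_sq (by norm_num)

lemma myint_sq_exp : Integrable (fun x : ℝ => x ^ 2 * rexp (-(2⁻¹ : ℝ) * x ^ 2)) := by
  have h2 : ∀ x : ℝ, x ^ (2:ℝ) = x ^ (2:ℕ) := fun x => by
    rw [← Real.rpow_natCast x 2]; norm_num
  have := integrable_rpow_mul_exp_neg_mul_sq (by norm_num : (0:ℝ) < 2⁻¹)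
    (by norm_num : (-1 : ℝ) < 2)
  refine this.congr (Filter.Eventually.of_forall fun x => ?_)
  simp only [h2]

lemma myintegral_id_exp : ∫ x : ℝ, x * rexp (-(2⁻¹ : ℝ) * x ^ 2) = 0 := by
  set f : ℝ → ℝ := fun x => x * rexp (-(2⁻¹ : ℝ) * x ^ 2) with hf
  have A : MeasurableEmbedding (fun x : ℝ => -x) :=
    (Homeomorph.neg ℝ).isClosedEmbedding.measurableEmbedding
  have h : ∫ x : ℝ, f x = - ∫ x : ℝ, f x := by
    calc ∫ x : ℝ, f x = ∫ x : ℝ, f x ∂(Measure.map (fun x : ℝ => -x) volume) := by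
          rw [show (fun x : ℝ => -x) = Neg.neg from rfl, Measure.map_neg_eq_self]
      _ = ∫ x : ℝ, f (-x) := A.integral_map _
      _ = ∫ x : ℝ, -f x := by congr 1; ext x; simp only [hf, neg_sq]; ring
      _ = - ∫ x : ℝ, f x := integral_neg f
  linarith

lemma myintegral_sq_exp : ∫ x : ℝ, x ^ 2 * rexp (-(2⁻¹ : ℝ) * x ^ 2) = Real.sqrt (2 * π) := by
  have hu : ∀ x : ℝ, HasDerivAt (fun y : ℝ => y) 1 x := fun x => hasDerivAt_id x
  have hv : ∀ x : ℝ, HasDerivAt (fun y : ℝ => -rexp (-(2⁻¹ : ℝ) * y ^ 2))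
      (x * rexp (-(2⁻¹ : ℝ) * x ^ 2)) x := by
    intro x
    have h1 : HasDerivAt (fun y : ℝ => -(2⁻¹ : ℝ) * y ^ 2) (-x) x := by
      have := (hasDerivAt_pow 2 x).const_mul (-(2⁻¹ : ℝ))
      simpa using this.congr_deriv (by ring)
    refine (h1.exp.neg).congr_deriv ?_
    ring
  have H := MeasureTheory.integral_mul_deriv_eq_deriv_mul_of_integrable (fun x _ => hu x) (fun x _ => hv x)
    ?_ ?_ ?_
  · rw [show (∫ x : ℝ, x * (x * rexp (-(2⁻¹:ℝ) * x ^ 2))) = ∫ x : ℝ, x ^ 2 * rexp (-(2⁻¹:ℝ) * x ^ 2) from by congr 1; ext x; ring] at H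
    rw [H]
    have : (∫ x : ℝ, (1:ℝ) * -rexp (-(2⁻¹:ℝ) * x ^ 2)) = -∫ x : ℝ, rexp (-(2⁻¹:ℝ) * x ^ 2) := by
      rw [← integral_neg]; congr 1; ext x; ring
    rw [this, neg_neg, integral_gaussian]
    rw [show π / 2⁻¹ = 2 * π by ring]
  · refine myint_sq_exp.congr (Filter.Eventually.of_forall fun x => ?_)
    simp [Pi.mul_apply]; ring
  · refine myint_exp.neg.congr (Filter.Eventually.of_forall fun x => ?_)
    simp [Pi.mul_apply]
  · refine myint_mul_exp.neg.congr (Filter.Eventually.of_forall fun x => ?_)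
    simp [Pi.mul_apply]

open MeasureTheory ProbabilityTheory Real

lemma mypdf_eq (x : ℝ) : gaussianPDFReal 0 1 x = (√(2*π))⁻¹ * rexp (-(2⁻¹:ℝ) * x ^ 2) := by
  simp only [gaussianPDFReal, NNReal.coe_one, mul_one, sub_zero]
  congr 1
  ring

lemma mymeas_pdf : Measurable (fun x => (gaussianPDFReal 0 1 x).toNNReal) :=
  (measurable_gaussianPDFReal 0 1).real_toNNReal

lemma mygauss_eq : gaussianReal 0 1 =
    volume.withDensity (fun x => ((gaussianPDFReal 0 1 x).toNNReal : ENNReal)) := by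
  rw [gaussianReal_of_var_ne_zero 0 one_ne_zero]
  rfl

lemma myintegral_gauss (f : ℝ → ℝ) :
    ∫ x, f x ∂(gaussianReal 0 1) = ∫ x, gaussianPDFReal 0 1 x * f x := by
  rw [mygauss_eq, integral_withDensity_eq_integral_smul mymeas_pdf]
  congr 1; ext x
  rw [NNReal.smul_def, Real.coe_toNNReal _ (gaussianPDFReal_nonneg 0 1 x)]
  rfl

lemma myintegrable_gauss_iff (f : ℝ → ℝ) :
    Integrable f (gaussianReal 0 1) ↔ Integrable (fun x => gaussianPDFReal 0 1 x * f x) := by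
  rw [mygauss_eq, integrable_withDensity_iff_integrable_smul mymeas_pdf]
  constructor <;> intro h <;> refine h.congr (Filter.Eventually.of_forall fun x => ?_) <;>
    simp only [NNReal.smul_def, Real.coe_toNNReal _ (gaussianPDFReal_nonneg 0 1 x), smul_eq_mul]

lemma myintegrable_id_gauss : Integrable (fun x : ℝ => x) (gaussianReal 0 1) := by
  rw [myintegrable_gauss_iff]
  refine (myint_mul_exp.const_mul ((√(2*π))⁻¹)).congr (Filter.Eventually.of_forall fun x => ?_)
  simp only [mypdf_eq]; ring

lemma myintegrable_sq_gauss : Integrable (fun x : ℝ => x ^ 2) (gaussianReal 0 1) := by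
  rw [myintegrable_gauss_iff]
  refine (myint_sq_exp.const_mul ((√(2*π))⁻¹)).congr (Filter.Eventually.of_forall fun x => ?_)
  simp only [mypdf_eq]; ring

lemma sqrt_two_pi_pos : (0:ℝ) < √(2*π) := Real.sqrt_pos.mpr (by positivity)

lemma myintegral_id_gauss : ∫ x, x ∂(gaussianReal 0 1) = 0 := by
  rw [myintegral_gauss]
  have : ∀ x : ℝ, gaussianPDFReal 0 1 x * x = (√(2*π))⁻¹ * (x * rexp (-(2⁻¹:ℝ) * x ^ 2)) :=
    fun x => by simp only [mypdf_eq]; ring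
  simp only [this]
  rw [integral_const_mul, myintegral_id_exp, mul_zero]

lemma myintegral_sq_gauss : ∫ x, x ^ 2 ∂(gaussianReal 0 1) = 1 := by
  rw [myintegral_gauss]
  have : ∀ x : ℝ, gaussianPDFReal 0 1 x * x ^ 2 = (√(2*π))⁻¹ * (x ^ 2 * rexp (-(2⁻¹:ℝ) * x ^ 2)) :=
    fun x => by simp only [mypdf_eq]; ring
  simp only [this]
  rw [integral_const_mul, myintegral_sq_exp, inv_mul_cancel₀ sqrt_two_pi_pos.ne']

lemma myL2mul {Ω : Type*} [MeasurableSpace Ω] {μ : Measure Ω} {f g : Ω → ℝ}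
    (hf : MeasureTheory.MemLp f 2 μ) (hg : MeasureTheory.MemLp g 2 μ) :
    Integrable (fun ω => f ω * g ω) μ := by
  refine Integrable.mono' (((hf.integrable_sq.add hg.integrable_sq).div_const 2))
    (hf.aestronglyMeasurable.mul hg.aestronglyMeasurable)
    (Filter.Eventually.of_forall fun ω => ?_)
  simp only [Pi.add_apply, Real.norm_eq_abs, abs_mul]
  nlinarith [sq_nonneg (|f ω| - |g ω|), sq_abs (f ω), sq_abs (g ω), abs_nonneg (f ω), abs_nonneg (g ω)]


end Helpers

/-- **Empirical Gaussian complexity bound for the subspace-constrained class.**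
If `W ⊆ ℝ^d` is a subspace with `dim W ≥ r` and `P_W` is the orthogonal projection onto `W`,
then `Ĝ_X(H_W) ≤ (r/√N) · √((1/N) Σ_i ‖P_W x_i‖²)`, where `H_W` is the class of maps
`h(x) = Bᵀx` with `B` having orthonormal columns all lying in `W`. -/
theorem empirical_gaussian_complexity_subspace_class
    {Ω : Type*} [MeasurableSpace Ω] (μ : Measure Ω) [IsProbabilityMeasure μ]
    (d r N : ℕ) (hr : 1 ≤ r) (hrd : r ≤ d) (hN : 1 ≤ N)
    (G : Fin r × Fin N → Ω → ℝ)
    (hGmeas : ∀ p, Measurable (G p))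
    (hGlaw : ∀ p, Measure.map (G p) μ = gaussianReal 0 1)
    (hGindep : iIndepFun G μ)
    (W : Submodule ℝ (EuclideanSpace ℝ (Fin d))) (hW : r ≤ Module.finrank ℝ W)
    (x : Fin N → EuclideanSpace ℝ (Fin d)) :
    (N : ℝ)⁻¹ *
        ∫ ω, (⨆ B : {B : Matrix (Fin d) (Fin r) ℝ // B.transpose * B = 1 ∧
            ∀ k : Fin r, (WithLp.equiv 2 (Fin d → ℝ)).symm (fun j => B j k) ∈ W},
          ∑ k : Fin r, ∑ i : Fin N,
            G (k, i) ω * ∑ j : Fin d, (B : Matrix (Fin d) (Fin r) ℝ) j k * x i j) ∂μ ≤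
      (r : ℝ) / Real.sqrt N *
        Real.sqrt ((N : ℝ)⁻¹ * ∑ i : Fin N, ‖(W.orthogonalProjection (x i) : W)‖ ^ 2) := by
  classical
  set T := {B : Matrix (Fin d) (Fin r) ℝ // B.transpose * B = 1 ∧
      ∀ k : Fin r, (WithLp.equiv 2 (Fin d → ℝ)).symm (fun j => B j k) ∈ W} with hT
  -- basic facts about each G p from the law
  have hInt : ∀ p, Integrable (G p) μ := by
    intro p
    have := (integrable_map_measure (f := G p) (g := fun y : ℝ => y)
      (by rw [hGlaw p]; exact aestronglyMeasurable_id) (hGmeas p).aemeasurable)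
    rw [hGlaw p] at this
    exact this.mp myintegrable_id_gauss
  have hMean : ∀ p, ∫ ω, G p ω ∂μ = 0 := by
    intro p
    have := integral_map (φ := G p) (f := fun y : ℝ => y) (hGmeas p).aemeasurable
      (by rw [hGlaw p]; exact aestronglyMeasurable_id)
    rw [hGlaw p, myintegral_id_gauss] at this
    exact this.symm
  have hSqInt : ∀ p, Integrable (fun ω => G p ω ^ 2) μ := by
    intro p
    have := (integrable_map_measure (f := G p) (g := fun y : ℝ => y ^ 2)
      (by rw [hGlaw p]; exact (measurable_id.pow_const 2).aestronglyMeasurable)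
      (hGmeas p).aemeasurable)
    rw [hGlaw p] at this
    exact this.mp myintegrable_sq_gauss
  have hSq : ∀ p, ∫ ω, G p ω ^ 2 ∂μ = 1 := by
    intro p
    have := integral_map (φ := G p) (f := fun y : ℝ => y ^ 2) (hGmeas p).aemeasurable
      (by rw [hGlaw p]; exact (measurable_id.pow_const 2).aestronglyMeasurable)
    rw [hGlaw p, myintegral_sq_gauss] at this
    exact this.symm
  have hMem2 : ∀ p, MeasureTheory.MemLp (G p) 2 μ := fun p =>
    (memLp_two_iff_integrable_sq (hGmeas p).aestronglyMeasurable).mpr (hSqInt p)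
  -- the ambient orthogonal projection
  set P : EuclideanSpace ℝ (Fin d) →L[ℝ] EuclideanSpace ℝ (Fin d) := W.subtypeL.comp (W.orthogonalProjection) with hP
  have hPapply : ∀ u : EuclideanSpace ℝ (Fin d), P u = (W.orthogonalProjection u : EuclideanSpace ℝ (Fin d)) := fun u => rfl
  -- the Gaussian vectors
  set v : Fin r → Ω → EuclideanSpace ℝ (Fin d) := fun k ω => ∑ i, G (k, i) ω • x i with hv
  set S : ℝ := ∑ i, ‖P (x i)‖ ^ 2 with hS
  have hSnonneg : 0 ≤ S := Finset.sum_nonneg fun i _ => sq_nonneg _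
  -- nonemptiness of the class
  obtain ⟨B₀⟩ : Nonempty T := by
    have horth := (stdOrthonormalBasis ℝ W).orthonormal
    rw [orthonormal_iff_ite] at horth
    refine ⟨⟨fun j k => ((stdOrthonormalBasis ℝ W) (Fin.castLE hW k) : EuclideanSpace ℝ (Fin d)) j,
      ?_, ?_⟩⟩
    · ext k l
      simp only [Matrix.mul_apply, Matrix.transpose_apply, Matrix.one_apply]
      have h1 : (∑ j, ((stdOrthonormalBasis ℝ W) (Fin.castLE hW k) : EuclideanSpace ℝ (Fin d)) j
            * ((stdOrthonormalBasis ℝ W) (Fin.castLE hW l) : EuclideanSpace ℝ (Fin d)) j)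
          = (inner ℝ ((stdOrthonormalBasis ℝ W) (Fin.castLE hW k) : EuclideanSpace ℝ (Fin d))
              ((stdOrthonormalBasis ℝ W) (Fin.castLE hW l) : EuclideanSpace ℝ (Fin d)) : ℝ) := by
        rw [PiLp.inner_apply]
        simp [RCLike.inner_apply, mul_comm]
      show (∑ j, ((stdOrthonormalBasis ℝ W) (Fin.castLE hW k) : EuclideanSpace ℝ (Fin d)) j
            * ((stdOrthonormalBasis ℝ W) (Fin.castLE hW l) : EuclideanSpace ℝ (Fin d)) j) = _
      rw [h1, ← Submodule.coe_inner, horth]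
      simp [Fin.castLE_inj]
    · intro k
      exact SetLike.coe_mem _
  -- negation stays in the class
  have hnegT : ∀ B : T, ((-B.1).transpose * (-B.1) = 1 ∧
      ∀ k : Fin r, (WithLp.equiv 2 (Fin d → ℝ)).symm (fun j => (-B.1) j k) ∈ W) := by
    intro B
    refine ⟨by rw [Matrix.transpose_neg, Matrix.neg_mul, Matrix.mul_neg, neg_neg, B.2.1], ?_⟩
    intro k
    have : (WithLp.equiv 2 (Fin d → ℝ)).symm (fun j => (-B.1) j k)
        = -((WithLp.equiv 2 (Fin d → ℝ)).symm (fun j => B.1 j k)) := rfl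
    rw [this]
    exact W.neg_mem (B.2.2 k)
  -- the value functional
  set val : T → Ω → ℝ := fun B ω => ∑ k : Fin r, ∑ i : Fin N,
      G (k, i) ω * ∑ j : Fin d, (B : Matrix (Fin d) (Fin r) ℝ) j k * x i j with hval
  -- pointwise bound
  have hbound : ∀ (ω : Ω) (B : T), val B ω ≤ ∑ k, ‖P (v k ω)‖ := by
    intro ω B
    refine Finset.sum_le_sum fun k _ => ?_
    set b : EuclideanSpace ℝ (Fin d) := (WithLp.equiv 2 (Fin d → ℝ)).symm (fun j => B.1 j k) with hb
    have hbW : b ∈ W := B.2.2 k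
    have hbnorm : ‖b‖ = 1 := by
      have hsum : (∑ j, ‖b j‖ ^ 2) = (B.1.transpose * B.1) k k := by
        simp only [Matrix.mul_apply, Matrix.transpose_apply]
        refine Finset.sum_congr rfl fun j _ => ?_
        rw [Real.norm_eq_abs, sq_abs, sq]
        rfl
      rw [EuclideanSpace.norm_eq, hsum, B.2.1]
      simp
    have hbx : ∀ i, (inner ℝ b (x i) : ℝ) = ∑ j : Fin d, B.1 j k * x i j := by
      intro i
      rw [PiLp.inner_apply]
      refine Finset.sum_congr rfl fun j _ => ?_
      simp [RCLike.inner_apply, hb, mul_comm]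
    have step1 : (∑ i : Fin N, G (k, i) ω * ∑ j : Fin d, B.1 j k * x i j)
        = (inner ℝ b (v k ω) : ℝ) := by
      rw [hv]
      simp only [inner_sum, real_inner_smul_right, hbx]
    have step2 : (inner ℝ b (v k ω) : ℝ) = (inner ℝ b (P (v k ω)) : ℝ) := by
      have hmem : v k ω - P (v k ω) ∈ Wᗮ := by
        rw [hPapply]
        exact W.sub_starProjection_mem_orthogonal (v k ω)
      have := (Submodule.mem_orthogonal W _).1 hmem b hbW
      have h2 : (inner ℝ b (v k ω) : ℝ) - inner ℝ b (P (v k ω)) = 0 := by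
        rw [← inner_sub_right]; exact this
      linarith
    calc (∑ i : Fin N, G (k, i) ω * ∑ j : Fin d, B.1 j k * x i j)
        = (inner ℝ b (P (v k ω)) : ℝ) := by rw [step1, step2]
      _ ≤ ‖b‖ * ‖P (v k ω)‖ := real_inner_le_norm _ _
      _ = ‖P (v k ω)‖ := by rw [hbnorm, one_mul]
  -- integrability pieces
  have hmeas_v : ∀ k, Measurable (v k) := by
    intro k
    exact Finset.measurable_sum _ fun i _ => (hGmeas (k, i)).smul_const (x i)
  have hmeas_Pv : ∀ k, Measurable (fun ω => ‖P (v k ω)‖) :=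
    fun k => (P.continuous.measurable.comp (hmeas_v k)).norm
  have hInt_v : ∀ k, Integrable (v k) μ :=
    fun k => integrable_finset_sum _ fun i _ => (hInt (k, i)).smul_const (x i)
  have hInt_Pv : ∀ k, Integrable (fun ω => ‖P (v k ω)‖) μ :=
    fun k => (P.integrable_comp (hInt_v k)).norm
  -- second moment identity
  have hexpand : ∀ k ω, ‖P (v k ω)‖ ^ 2
      = ∑ i, ∑ i', (G (k, i) ω * G (k, i') ω) * (inner ℝ (P (x i)) (P (x i')) : ℝ) := by
    intro k ω
    have hPv : P (v k ω) = ∑ i, G (k, i) ω • P (x i) := by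
      rw [hv, map_sum]
      refine Finset.sum_congr rfl fun i _ => ?_
      exact P.map_smul _ _
    rw [← real_inner_self_eq_norm_sq, hPv, sum_inner]
    refine Finset.sum_congr rfl fun i _ => ?_
    rw [inner_sum]
    refine Finset.sum_congr rfl fun i' _ => ?_
    rw [real_inner_smul_left, real_inner_smul_right]
    ring
  have hterm_int : ∀ (k : Fin r) (i i' : Fin N),
      Integrable (fun ω => (G (k, i) ω * G (k, i') ω) * (inner ℝ (P (x i)) (P (x i')) : ℝ)) μ :=
    fun k i i' => (myL2mul (hMem2 (k, i)) (hMem2 (k, i'))).mul_const _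
  have hsqint : ∀ k, Integrable (fun ω => ‖P (v k ω)‖ ^ 2) μ := by
    intro k
    have h0 : Integrable (fun ω => ∑ i, ∑ i',
        (G (k, i) ω * G (k, i') ω) * (inner ℝ (P (x i)) (P (x i')) : ℝ)) μ :=
      integrable_finset_sum _ fun i _ => integrable_finset_sum _ fun i' _ => hterm_int k i i'
    exact h0.congr (Filter.Eventually.of_forall fun ω => (hexpand k ω).symm)
  have hGG : ∀ (k : Fin r) (i i' : Fin N),
      ∫ ω, G (k, i) ω * G (k, i') ω ∂μ = if i = i' then 1 else 0 := by
    intro k i i'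
    by_cases h : i = i'
    · subst h
      simp only [if_true]
      rw [show (fun ω => G (k, i) ω * G (k, i) ω) = fun ω => G (k, i) ω ^ 2 from
        funext fun ω => (sq (G (k, i) ω)).symm]
      exact hSq (k, i)
    · rw [if_neg h]
      have hindep : IndepFun (G (k, i)) (G (k, i')) μ :=
        hGindep.indepFun (by simp [Prod.ext_iff, h])
      have := hindep.integral_mul_eq_mul_integral (hGmeas (k, i)).aestronglyMeasurable
        (hGmeas (k, i')).aestronglyMeasurable
      rw [show (fun ω => G (k, i) ω * G (k, i') ω) = G (k, i) * G (k, i') from rfl, this,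
        hMean (k, i), zero_mul]
  have hsecond : ∀ k, ∫ ω, ‖P (v k ω)‖ ^ 2 ∂μ = S := by
    intro k
    calc ∫ ω, ‖P (v k ω)‖ ^ 2 ∂μ
        = ∫ ω, ∑ i, ∑ i', (G (k, i) ω * G (k, i') ω) * (inner ℝ (P (x i)) (P (x i')) : ℝ) ∂μ := by
          congr 1; ext ω; exact hexpand k ω
      _ = ∑ i, ∑ i', (∫ ω, G (k, i) ω * G (k, i') ω ∂μ) * (inner ℝ (P (x i)) (P (x i')) : ℝ) := by
          rw [integral_finset_sum _ fun i _ => integrable_finset_sum _ fun i' _ =>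
            hterm_int k i i']
          congr 1; ext i
          rw [integral_finset_sum _ fun i' _ => hterm_int k i i']
          congr 1; ext i'
          rw [integral_mul_const]
      _ = ∑ i, (inner ℝ (P (x i)) (P (x i)) : ℝ) := by
          congr 1; ext i
          rw [Finset.sum_eq_single i]
          · rw [hGG k i i, if_pos rfl, one_mul]
          · intro i' _ hne
            rw [hGG k i i', if_neg (Ne.symm hne), zero_mul]
          · intro h; exact absurd (Finset.mem_univ i) h
      _ = S := by
          rw [hS]; congr 1; ext i; rw [real_inner_self_eq_norm_sq]
  -- first moment bound via variance
  have hfirst : ∀ k, ∫ ω, ‖P (v k ω)‖ ∂μ ≤ Real.sqrt S := by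
    intro k
    have hmem : MeasureTheory.MemLp (fun ω => ‖P (v k ω)‖) 2 μ :=
      (memLp_two_iff_integrable_sq (hmeas_Pv k).aestronglyMeasurable).mpr (hsqint k)
    have hvar := variance_nonneg (fun ω => ‖P (v k ω)‖) μ
    rw [variance_eq_sub hmem] at hvar
    have hle : (∫ ω, ‖P (v k ω)‖ ∂μ) ^ 2 ≤ ∫ ω, ‖P (v k ω)‖ ^ 2 ∂μ := by
      simpa using hvar
    rw [hsecond k] at hle
    have hnn : 0 ≤ ∫ ω, ‖P (v k ω)‖ ∂μ := integral_nonneg fun ω => norm_nonneg _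
    exact (Real.le_sqrt hnn hSnonneg).mpr hle
  -- sup bounds
  haveI : Nonempty T := ⟨B₀⟩
  have hbdd : ∀ ω, BddAbove (Set.range fun B : T => val B ω) := by
    intro ω
    exact ⟨∑ k, ‖P (v k ω)‖, by rintro y ⟨B, rfl⟩; exact hbound ω B⟩
  have hsup_le : ∀ ω, (⨆ B : T, val B ω) ≤ ∑ k, ‖P (v k ω)‖ :=
    fun ω => ciSup_le fun B => hbound ω B
  have hvalneg : ∀ (B : T) (ω : Ω), val ⟨-B.1, hnegT B⟩ ω = -val B ω := by
    intro B ω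
    simp [hval, Matrix.neg_apply, neg_mul, mul_neg, Finset.sum_neg_distrib]
  have hsup_nonneg : ∀ ω, 0 ≤ ⨆ B : T, val B ω := by
    intro ω
    rcases le_or_gt 0 (val B₀ ω) with h | h
    · exact h.trans (le_ciSup (hbdd ω) B₀)
    · have := le_ciSup (hbdd ω) (⟨-B₀.1, hnegT B₀⟩ : T)
      rw [hvalneg B₀ ω] at this
      linarith
  -- integral bound
  have hInt_g : Integrable (fun ω => ∑ k, ‖P (v k ω)‖) μ :=
    integrable_finset_sum _ fun k _ => hInt_Pv k
  have hmain : ∫ ω, (⨆ B : T, val B ω) ∂μ ≤ (r : ℝ) * Real.sqrt S := by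
    calc ∫ ω, (⨆ B : T, val B ω) ∂μ ≤ ∫ ω, ∑ k, ‖P (v k ω)‖ ∂μ :=
          integral_mono_of_nonneg (Filter.Eventually.of_forall hsup_nonneg) hInt_g
            (Filter.Eventually.of_forall hsup_le)
      _ = ∑ k, ∫ ω, ‖P (v k ω)‖ ∂μ := integral_finset_sum _ fun k _ => hInt_Pv k
      _ ≤ ∑ k : Fin r, Real.sqrt S := Finset.sum_le_sum fun k _ => hfirst k
      _ = (r : ℝ) * Real.sqrt S := by rw [Finset.sum_const, Finset.card_univ,
          Fintype.card_fin, nsmul_eq_mul]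
  -- final arithmetic
  have hNpos : (0 : ℝ) < N := by exact_mod_cast hN
  have hSS : (∑ i : Fin N, ‖(W.orthogonalProjection (x i) : W)‖ ^ 2) = S := by
    rw [hS]
    refine Finset.sum_congr rfl fun i _ => ?_
    rw [hPapply, Submodule.norm_coe]
  have hsupnn : 0 ≤ ∫ ω, (⨆ B : T, val B ω) ∂μ :=
    integral_nonneg hsup_nonneg
  show (N : ℝ)⁻¹ * ∫ ω, (⨆ B : T, val B ω) ∂μ ≤ _
  calc (N : ℝ)⁻¹ * ∫ ω, (⨆ B : T, val B ω) ∂μ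
      ≤ (N : ℝ)⁻¹ * ((r : ℝ) * Real.sqrt S) := by
        exact mul_le_mul_of_nonneg_left hmain (by positivity)
    _ = (r : ℝ) / Real.sqrt N * Real.sqrt ((N : ℝ)⁻¹ * S) := by
        rw [Real.sqrt_mul (by positivity) S, Real.sqrt_inv, div_eq_mul_inv]
        have h1 : Real.sqrt N * Real.sqrt N = N := Real.mul_self_sqrt hNpos.le
        have h2 : (N : ℝ)⁻¹ = (Real.sqrt N)⁻¹ * (Real.sqrt N)⁻¹ := by rw [← mul_inv, h1]
        rw [h2]; ring
    _ = (r : ℝ) / Real.sqrt N *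
        Real.sqrt ((N : ℝ)⁻¹ * ∑ i : Fin N, ‖(W.orthogonalProjection (x i) : W)‖ ^ 2) := by
        rw [hSS]
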